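/- arXiv:2005.13179 — 3 statements merged into one kernel-verified Lean document; each statement's English description precedes it below -/
import Mathlib

section
/- A linear time-invariant system x'(t) = Ax(t) + Bu(t), with A an N×N real matrix and B an N×M real matrix, is controllable (any initial state can be driven to any final state in finite time) if and only if the controllability matrix C = [B, AB, A²B, ..., A^{N-1}B] has rank N. -/
/-!
If `vᵀ Aᵏ B = 0` for `k < N`, then by Cayley–Hamilton the same holds for every power of `A`,
hence `vᵀ e^{tA} B = 0` for all `t`; along any trajectory `t ↦ vᵀ e^{-tA} x(t)` is then constant,
so the state `v` cannot be steered to `0` unless `v = 0`.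

Conversely, suppose no nonzero `v` annihilates the controllability matrix. For the Gramian
`W = ∫₀¹ e^{-sA} B Bᵀ e^{-sAᵀ} ds` we have `vᵀ W v = ∫₀¹ ‖vᵀ e^{-sA} B‖²`, which vanishes only if
`vᵀ e^{-sA} B` vanishes on `(0, 1)`; differentiating repeatedly and letting `s → 0` gives
`vᵀ Aᵏ B = 0` for all `k`, so `v = 0` and `W` is invertible. Duhamel's formula then shows that the
control `u(s) = Bᵀ e^{-sAᵀ} z`, with `W z = e^{-A} x₁ - x₀`, steers `x₀` to `x₁` at time `1`.
-/

open Matrix NormedSpace Set Polynomial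
open scoped Matrix.Norms.Operator

theorem Matrix.rank_eq_card_iff_vecMul_injective {K m n : Type*} [Field K] [Fintype m]
    [Fintype n] (C : Matrix m n K) : C.rank = Fintype.card m ↔ Function.Injective C.vecMul := by
  rw [vecMul_injective_iff, linearIndependent_iff_card_eq_finrank_span, rank_eq_finrank_span_row,
    Set.finrank, eq_comm]

theorem Matrix.mem_span_pow_of_mem_adjoin {R n : Type*} [CommRing R] [Fintype n] [DecidableEq n]
    (A : Matrix n n R) {X : Matrix n n R} (hX : X ∈ Algebra.adjoin R {A}) :
    X ∈ Submodule.span R ((A ^ ·) '' Iio (Fintype.card n)) := by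
  rcases subsingleton_or_nontrivial R with hR | hR
  · simp [Subsingleton.elim X 0]
  rcases isEmpty_or_nonempty n with hn | hn
  · simp [Subsingleton.elim X 0]
  rw [Algebra.adjoin_singleton_eq_range_aeval] at hX
  obtain ⟨p, rfl⟩ := hX
  have hdeg : (p %ₘ A.charpoly).natDegree < Fintype.card n := by
    rw [← A.charpoly_natDegree_eq_dim]
    refine natDegree_modByMonic_lt p A.charpoly_monic fun h => Fintype.card_ne_zero (α := n) ?_
    simpa [h] using A.charpoly_natDegree_eq_dim.symm
  rw [AlgHom.toRingHom_eq_coe, RingHom.coe_coe, aeval_eq_aeval_mod_charpoly,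
    aeval_eq_sum_range' hdeg]
  exact Submodule.sum_mem _ fun i hi =>
    Submodule.smul_mem _ _ (Submodule.subset_span ⟨i, Finset.mem_range.mp hi, rfl⟩)

section ControllabilityMatrix

variable {R n m : Type*} [CommRing R] [Fintype n] [DecidableEq n]

def controllabilityMatrix (k : ℕ) (A : Matrix n n R) (B : Matrix n m R) :
    Matrix n (Fin k × m) R :=
  Matrix.of fun i p => (A ^ (p.1 : ℕ) * B) i p.2

theorem vecMul_controllabilityMatrix_eq_zero_iff (k : ℕ) (A : Matrix n n R) (B : Matrix n m R)
    (v : n → R) :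
    v ᵥ* controllabilityMatrix k A B = 0 ↔ ∀ i < k, v ᵥ* (A ^ i * B) = 0 := by
  simp only [funext_iff, Prod.forall, Fin.forall_iff]
  rfl

theorem rank_controllabilityMatrix_eq_card_iff {K : Type*} [Field K] [Fintype m] (k : ℕ)
    (A : Matrix n n K) (B : Matrix n m K) :
    (controllabilityMatrix k A B).rank = Fintype.card n ↔
      ∀ v : n → K, (∀ i < k, v ᵥ* (A ^ i * B) = 0) → v = 0 := by
  rw [rank_eq_card_iff_vecMul_injective, ← coe_vecMulLinear, injective_iff_map_eq_zero]
  simp only [vecMulLinear_apply, vecMul_controllabilityMatrix_eq_zero_iff]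

end ControllabilityMatrix

section Calculus

variable {m n : Type*} [Fintype m] [Fintype n]

theorem HasDerivAt.matrix_mulVec {X : ℝ → Matrix m n ℝ} {y : ℝ → n → ℝ} {X' : Matrix m n ℝ}
    {y' : n → ℝ} {t : ℝ} (hX : HasDerivAt X X' t) (hy : HasDerivAt y y' t) :
    HasDerivAt (fun s => X s *ᵥ y s) (X t *ᵥ y' + X' *ᵥ y t) t := by
  let L : Matrix m n ℝ →L[ℝ] (n → ℝ) →L[ℝ] m → ℝ := LinearMap.toContinuousLinearMap
    (LinearMap.toContinuousLinearMap.toLinearMap ∘ₗ mulVecBilin ℝ ℝ)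
  exact L.hasDerivAt_of_bilinear (fun _ => hX) (fun _ => hy)

theorem HasDerivAt.matrix_vecMul {y : ℝ → m → ℝ} {X : ℝ → Matrix m n ℝ} {y' : m → ℝ}
    {X' : Matrix m n ℝ} {t : ℝ} (hy : HasDerivAt y y' t) (hX : HasDerivAt X X' t) :
    HasDerivAt (fun s => y s ᵥ* X s) (y t ᵥ* X' + y' ᵥ* X t) t := by
  let L : (m → ℝ) →L[ℝ] Matrix m n ℝ →L[ℝ] n → ℝ := LinearMap.toContinuousLinearMap
    (LinearMap.toContinuousLinearMap.toLinearMap ∘ₗ vecMulBilin ℝ ℝ)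
  exact L.hasDerivAt_of_bilinear (fun _ => hy) (fun _ => hX)

theorem HasDerivAt.const_dotProduct (v : n → ℝ) {y : ℝ → n → ℝ} {y' : n → ℝ} {t : ℝ}
    (hy : HasDerivAt y y' t) : HasDerivAt (fun s => v ⬝ᵥ y s) (v ⬝ᵥ y') t :=
  (LinearMap.toContinuousLinearMap (dotProductBilin ℝ ℝ v)).hasFDerivAt.comp_hasDerivAt t hy

variable [DecidableEq n] (A : Matrix n n ℝ)

-- `hasDerivAt_exp_smul_const(')` with `exp` elaborated in the default ring structure on
-- matrices instead of the operator-norm one, so that it matches the `exp` of the statements below.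
theorem Matrix.hasDerivAt_exp_smul (t : ℝ) :
    HasDerivAt (fun s : ℝ => exp (s • A)) (exp (t • A) * A) t :=
  hasDerivAt_exp_smul_const A t

theorem Matrix.hasDerivAt_exp_smul' (t : ℝ) :
    HasDerivAt (fun s : ℝ => exp (s • A)) (A * exp (t • A)) t :=
  hasDerivAt_exp_smul_const' A t

theorem Matrix.continuous_exp_smul : Continuous fun t : ℝ => exp (t • A) :=
  exp_continuous.comp (continuous_id.smul continuous_const)

theorem Matrix.exp_smul_mul_exp_neg_smul (t : ℝ) : exp (t • A) * exp (t • -A) = 1 := by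
  rw [smul_neg, ← exp_add_of_commute (t • A) _ (Commute.refl _).neg_right, add_neg_cancel,
    exp_zero]

theorem Matrix.exp_smul_mem_adjoin (t : ℝ) : exp (t • A) ∈ Algebra.adjoin ℝ {A} :=
  exp_mem (R := ℝ) (s := Algebra.adjoin ℝ {A})
    (Submodule.closed_of_finiteDimensional (Subalgebra.toSubmodule (Algebra.adjoin ℝ {A})))
    (Subalgebra.smul_mem _ (Algebra.self_mem_adjoin_singleton ℝ A) t)

end Calculus

section Gramian

variable {m n : Type*} [Fintype m] [Fintype n]

noncomputable def gramian (P : ℝ → Matrix n m ℝ) (a b : ℝ) : Matrix n n ℝ :=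
  ∫ s in a..b, P s * (P s)ᵀ

variable {P : ℝ → Matrix n m ℝ}

theorem gramian_mulVec (hP : Continuous P) (a b : ℝ) (z : n → ℝ) :
    gramian P a b *ᵥ z = ∫ s in a..b, P s *ᵥ (z ᵥ* P s) := by
  let L : Matrix n n ℝ →L[ℝ] n → ℝ := LinearMap.toContinuousLinearMap ((mulVecBilin ℝ ℝ).flip z)
  have := L.intervalIntegral_comp_comm
    ((hP.matrix_mul hP.matrix_transpose).intervalIntegrable (μ := MeasureTheory.volume) a b)
  change ∫ s in a..b, (P s * (P s)ᵀ) *ᵥ z = gramian P a b *ᵥ z at this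
  simp only [← mulVec_mulVec, mulVec_transpose] at this
  exact this.symm

theorem dotProduct_gramian_mulVec (hP : Continuous P) (a b : ℝ) (z : n → ℝ) :
    z ⬝ᵥ (gramian P a b *ᵥ z) = ∫ s in a..b, z ᵥ* P s ⬝ᵥ z ᵥ* P s := by
  let L : (n → ℝ) →L[ℝ] ℝ := LinearMap.toContinuousLinearMap (dotProductBilin ℝ ℝ z)
  have := L.intervalIntegral_comp_comm (f := fun s => P s *ᵥ (z ᵥ* P s))
    ((hP.matrix_mulVec (continuous_const.matrix_vecMul hP)).intervalIntegrable
      (μ := MeasureTheory.volume) a b)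
  change ∫ s in a..b, z ⬝ᵥ (P s *ᵥ (z ᵥ* P s)) = z ⬝ᵥ ∫ s in a..b, P s *ᵥ (z ᵥ* P s) at this
  rw [gramian_mulVec hP, ← this]
  simp only [dotProduct_mulVec]

theorem vecMul_eq_zero_of_gramian_mulVec_eq_zero (hP : Continuous P) {a b : ℝ} (hab : a ≤ b)
    {z : n → ℝ} (hz : gramian P a b *ᵥ z = 0) : ∀ s ∈ Ioc a b, z ᵥ* P s = 0 := by
  have hq : Continuous fun s => z ᵥ* P s ⬝ᵥ z ᵥ* P s :=
    (continuous_const.matrix_vecMul hP).dotProduct (continuous_const.matrix_vecMul hP)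
  have hq0 (s : ℝ) : 0 ≤ z ᵥ* P s ⬝ᵥ z ᵥ* P s := Fintype.sum_nonneg fun _ => mul_self_nonneg _
  have hint : ∫ s in a..b, z ᵥ* P s ⬝ᵥ z ᵥ* P s = 0 := by
    rw [← dotProduct_gramian_mulVec hP, hz, dotProduct_zero]
  rw [intervalIntegral.integral_eq_zero_iff_of_le_of_nonneg_ae hab
    (Filter.Eventually.of_forall hq0) (hq.intervalIntegrable a b)] at hint
  exact fun s hs => dotProduct_self_eq_zero.mp
    (MeasureTheory.Measure.eqOn_Ioc_of_ae_eq _ hint hq.continuousOn continuousOn_const hs)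

theorem mulVec_gramian_surjective [DecidableEq n] (hP : Continuous P) {a b : ℝ} (hab : a ≤ b)
    (h : ∀ z : n → ℝ, (∀ s ∈ Ioc a b, z ᵥ* P s = 0) → z = 0) :
    Function.Surjective (gramian P a b *ᵥ ·) := by
  rw [mulVec_surjective_iff_isUnit, ← mulVec_injective_iff_isUnit, ← coe_mulVecLin,
    injective_iff_map_eq_zero]
  exact fun z hz => h z (vecMul_eq_zero_of_gramian_mulVec_eq_zero hP hab hz)

end Gramian

section LinearSystem

variable {n m : Type*} [Fintype n] [DecidableEq n] (A : Matrix n n ℝ) (B : Matrix n m ℝ)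

theorem vecMul_exp_smul_mul_eq_zero {v : n → ℝ}
    (hv : ∀ k < Fintype.card n, v ᵥ* (A ^ k * B) = 0) (t : ℝ) : v ᵥ* (exp (t • A) * B) = 0 := by
  have hmem := A.mem_span_pow_of_mem_adjoin (A.exp_smul_mem_adjoin t)
  generalize exp (t • A) = X at hmem ⊢
  induction hmem using Submodule.span_induction with
  | mem X hX => obtain ⟨k, hk, rfl⟩ := hX; exact hv k hk
  | zero => simp
  | add X Y _ _ hX hY => rw [Matrix.add_mul, vecMul_add, hX, hY, add_zero]
  | smul c X _ hX => rw [Matrix.smul_mul, vecMul_smul, hX, smul_zero]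

variable [Fintype m]

theorem vecMul_pow_mul_eq_zero_of_vecMul_exp_mul_eq_zero {v : n → ℝ} {U : Set ℝ} (hU : IsOpen U)
    (h0 : (0 : ℝ) ∈ closure U) (h : ∀ s ∈ U, v ᵥ* (exp (s • -A) * B) = 0) (k : ℕ) :
    v ᵥ* (A ^ k * B) = 0 := by
  set w : ℝ → n → ℝ := fun s => v ᵥ* exp (s • -A)
  have hw (s : ℝ) : HasDerivAt w (-(w s ᵥ* A)) s := by
    have := (hasDerivAt_const s v).matrix_vecMul ((-A).hasDerivAt_exp_smul s)
    rwa [zero_vecMul, add_zero, ← vecMul_vecMul, vecMul_neg] at this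
  -- `w s ᵥ* (Aᵏ * B)` vanishes on the open set `U`, hence so does its derivative
  -- `-(w s ᵥ* (Aᵏ⁺¹ * B))`.
  have hzero (k : ℕ) : ∀ s ∈ U, w s ᵥ* (A ^ k * B) = 0 := by
    induction k with
    | zero => simpa [w, vecMul_vecMul] using h
    | succ k ih =>
      intro s hs
      have hd := (hw s).matrix_vecMul (hasDerivAt_const s (A ^ k * B))
      have hd0 : HasDerivAt (fun s => w s ᵥ* (A ^ k * B)) 0 s :=
        (hasDerivAt_const s 0).congr_of_eventuallyEq (Filter.eventually_of_mem (hU.mem_nhds hs) ih)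
      have := hd.unique hd0
      rwa [vecMul_zero, zero_add, neg_vecMul, neg_eq_zero, vecMul_vecMul, ← Matrix.mul_assoc,
        ← pow_succ'] at this
  have hcont : Continuous fun s => w s ᵥ* (A ^ k * B) :=
    (continuous_iff_continuousAt.mpr fun s => (hw s).continuousAt).matrix_vecMul continuous_const
  simpa [w] using Set.EqOn.closure (hzero k) hcont continuous_const h0

theorem hasDerivAt_exp_neg_smul_mulVec {x : ℝ → n → ℝ} {f : n → ℝ} {t : ℝ}
    (hx : HasDerivAt x (A *ᵥ x t + f) t) :
    HasDerivAt (fun s => exp (s • -A) *ᵥ x s) (exp (t • -A) *ᵥ f) t := by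
  convert ((-A).hasDerivAt_exp_smul t).matrix_mulVec hx using 1
  simp only [mulVec_add, ← mulVec_mulVec, neg_mulVec, mulVec_neg]
  abel

noncomputable def duhamel (x₀ : n → ℝ) (f : ℝ → n → ℝ) (t : ℝ) : n → ℝ :=
  exp (t • A) *ᵥ (x₀ + ∫ s in (0 : ℝ)..t, exp (s • -A) *ᵥ f s)

theorem duhamel_zero (x₀ : n → ℝ) (f : ℝ → n → ℝ) : duhamel A x₀ f 0 = x₀ := by
  simp [duhamel]

theorem hasDerivAt_duhamel (x₀ : n → ℝ) {f : ℝ → n → ℝ} (hf : Continuous f) (t : ℝ) :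
    HasDerivAt (duhamel A x₀ f) (A *ᵥ duhamel A x₀ f t + f t) t := by
  have hy := (((-A).continuous_exp_smul.matrix_mulVec hf).integral_hasStrictDerivAt 0 t).hasDerivAt
  refine ((A.hasDerivAt_exp_smul' t).matrix_mulVec (hy.const_add x₀)).congr_deriv ?_
  rw [mulVec_mulVec, exp_smul_mul_exp_neg_smul, one_mulVec, ← mulVec_mulVec, add_comm]
  rfl

def IsControllable : Prop :=
  ∀ x₀ x₁ : n → ℝ, ∃ T : ℝ, 0 < T ∧ ∃ u : ℝ → m → ℝ, Continuous u ∧ ∃ x : ℝ → n → ℝ,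
    (∀ t : ℝ, HasDerivAt x (A *ᵥ x t + B *ᵥ u t) t) ∧ x 0 = x₀ ∧ x T = x₁

variable {A B} in
theorem IsControllable.eq_zero_of_vecMul_pow_mul_eq_zero (hc : IsControllable A B) {v : n → ℝ}
    (hv : ∀ k < Fintype.card n, v ᵥ* (A ^ k * B) = 0) : v = 0 := by
  obtain ⟨T, -, u, -, x, hx, hx0, hxT⟩ := hc v 0
  have hderiv (t : ℝ) : HasDerivAt (fun s => v ⬝ᵥ (exp (s • -A) *ᵥ x s)) 0 t := by
    have hvB : v ᵥ* (exp (t • -A) * B) = 0 := by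
      rw [smul_neg, ← neg_smul]
      exact vecMul_exp_smul_mul_eq_zero A B hv (-t)
    have := (hasDerivAt_exp_neg_smul_mulVec A (hx t)).const_dotProduct v
    rwa [mulVec_mulVec, dotProduct_mulVec, hvB, zero_dotProduct] at this
  have := is_const_of_deriv_eq_zero (fun t => (hderiv t).differentiableAt)
    (fun t => (hderiv t).deriv) 0 T
  simp only [zero_smul, exp_zero, one_mulVec, hx0, hxT, mulVec_zero, dotProduct_zero] at this
  exact dotProduct_self_eq_zero.mp this

theorem isControllable_of_forall_vecMul_pow_mul_eq_zero
    (h : ∀ v : n → ℝ, (∀ k < Fintype.card n, v ᵥ* (A ^ k * B) = 0) → v = 0) :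
    IsControllable A B := by
  intro x₀ x₁
  set P : ℝ → Matrix n m ℝ := fun s => exp (s • -A) * B
  have hP : Continuous P := (-A).continuous_exp_smul.matrix_mul continuous_const
  obtain ⟨z, hz⟩ : ∃ z, gramian P 0 1 *ᵥ z = exp ((1 : ℝ) • -A) *ᵥ x₁ - x₀ :=
    mulVec_gramian_surjective hP zero_le_one
      (fun z hz => h z fun k _ => vecMul_pow_mul_eq_zero_of_vecMul_exp_mul_eq_zero A B isOpen_Ioo
        (by simp [closure_Ioo]) (fun s hs => hz s (Ioo_subset_Ioc_self hs)) k) _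
  set u : ℝ → m → ℝ := fun s => z ᵥ* P s
  have hu : Continuous u := continuous_const.matrix_vecMul hP
  refine ⟨1, one_pos, u, hu, duhamel A x₀ (fun s => B *ᵥ u s),
    hasDerivAt_duhamel A x₀ (continuous_const.matrix_mulVec hu), duhamel_zero A x₀ _, ?_⟩
  have hint : ∫ s in (0 : ℝ)..1, exp (s • -A) *ᵥ (B *ᵥ u s) = exp ((1 : ℝ) • -A) *ᵥ x₁ - x₀ := by
    rw [← hz, gramian_mulVec hP]
    simp only [P, u, mulVec_mulVec]
  rw [duhamel, hint, add_sub_cancel, mulVec_mulVec, exp_smul_mul_exp_neg_smul, one_mulVec]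

theorem isControllable_iff :
    IsControllable A B ↔ ∀ v : n → ℝ, (∀ k < Fintype.card n, v ᵥ* (A ^ k * B) = 0) → v = 0 :=
  ⟨fun hc _ => hc.eq_zero_of_vecMul_pow_mul_eq_zero,
    isControllable_of_forall_vecMul_pow_mul_eq_zero A B⟩

end LinearSystem

/-- Kalman's rank condition: the LTI system `x' = Ax + Bu` is controllable
(any initial state can be driven to any final state in finite time)
iff the controllability matrix `[B, AB, ..., A^{N-1}B]` has rank `N`. -/
theorem kalman_rank_condition (N M : ℕ)
    (A : Matrix (Fin N) (Fin N) ℝ) (B : Matrix (Fin N) (Fin M) ℝ) :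
    (∀ x₀ x₁ : Fin N → ℝ, ∃ T : ℝ, 0 < T ∧
      ∃ u : ℝ → Fin M → ℝ, Continuous u ∧
        ∃ x : ℝ → Fin N → ℝ,
          (∀ t : ℝ, HasDerivAt x (A.mulVec (x t) + B.mulVec (u t)) t) ∧
          x 0 = x₀ ∧ x T = x₁) ↔
    (Matrix.of fun (i : Fin N) (p : Fin N × Fin M) =>
        (A ^ (p.1 : ℕ) * B) i p.2).rank = N := by
  have hctrb := isControllable_iff A B
  have hrank := rank_controllabilityMatrix_eq_card_iff N A B
  simp only [Fintype.card_fin] at hctrb hrank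
  exact hctrb.trans hrank.symm
end

section
/- In a directed graph G on vertex set V with a designated set U of input vertices, if some vertex v ∈ V is not reachable by a directed path from any vertex of U (v is non-accessible), then for every choice of edge weights consistent with G, the resulting linear system with inputs at U fails Kalman's rank condition. -/
/-!
The set of vertices from which `v` is reachable is closed under taking predecessors and carries
no input. By induction on `k`, every row of `A ^ k * B` indexed by such a vertex vanishes, so row
`v` of the controllability matrix is zero, and its range lies in the hyperplane `x v = 0`.
-/

open Matrix

theorem Matrix.rank_lt_card_of_row_eq_zero {m n K : Type*} [Fintype m] [Fintype n] [Field K]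
    (A : Matrix m n K) (i : m) (hi : A i = 0) : A.rank < Fintype.card m := by
  classical
  have hrange : LinearMap.range A.mulVecLin ≤ LinearMap.ker (LinearMap.proj i) := by
    rintro _ ⟨x, rfl⟩
    simp [mulVec, hi]
  have hker : LinearMap.ker (LinearMap.proj i : (m → K) →ₗ[K] K) ≠ ⊤ := fun htop => by
    simpa using htop.ge (Submodule.mem_top (x := Pi.single i (1 : K)))
  calc A.rank ≤ Module.finrank K (LinearMap.ker (LinearMap.proj i : (m → K) →ₗ[K] K)) :=
        Submodule.finrank_mono hrange
    _ < Module.finrank K (m → K) := Submodule.finrank_lt hker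
    _ = Fintype.card m := Module.finrank_fintype_fun_eq_card K

theorem Matrix.pow_mul_apply_eq_zero_of_predecessor_closed {n m R : Type*} [Fintype n] [DecidableEq n]
    [Semiring R] {A : Matrix n n R} {B : Matrix n m R} {S : n → Prop}
    (hA : ∀ i u, S i → A i u ≠ 0 → S u) (hB : ∀ i, S i → B i = 0) (k : ℕ) :
    ∀ i, S i → (A ^ k * B) i = 0 := by
  induction k with
  | zero => simpa using hB
  | succ k ih =>
    intro i hi
    funext j
    rw [pow_succ', Matrix.mul_assoc, mul_apply]
    refine Finset.sum_eq_zero fun u _ => ?_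
    by_cases hAiu : A i u = 0
    · rw [hAiu, zero_mul]
    · rw [ih u (hA i u hi hAiu), Pi.zero_apply, mul_zero]

/-- If some state vertex `v` is not reachable by a directed path from any input vertex,
then every linear system `(A, B)` consistent with the graph fails Kalman's rank condition.
`E j i` means there is an edge from `j` to `i`; `H j i` means input `j` attaches to state `i`. -/
theorem nonaccessible_implies_uncontrollable (N M : ℕ)
    (E : Fin N → Fin N → Prop) (H : Fin M → Fin N → Prop) (v : Fin N)
    (hv : ¬ ∃ (j : Fin M) (i : Fin N), H j i ∧ Relation.ReflTransGen E i v)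
    (A : Matrix (Fin N) (Fin N) ℝ) (B : Matrix (Fin N) (Fin M) ℝ)
    (hA : ∀ i j : Fin N, A i j ≠ 0 → E j i)
    (hB : ∀ (i : Fin N) (j : Fin M), B i j ≠ 0 → H j i) :
    (Matrix.of fun (i : Fin N) (p : Fin N × Fin M) =>
        (A ^ (p.1 : ℕ) * B) i p.2).rank < N := by
  have hzero (k : ℕ) : (A ^ k * B) v = 0 := by
    refine pow_mul_apply_eq_zero_of_predecessor_closed (S := (Relation.ReflTransGen E · v))
      (fun i u hi hAiu => hi.head (hA i u hAiu)) (fun i hi => ?_) k v .refl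
    funext j
    by_contra hBij
    exact hv ⟨j, i, hB i j hBij, hi⟩
  simpa using rank_lt_card_of_row_eq_zero _ v (funext fun p => congrFun (hzero p.1) p.2)
end

section
/- If a directed graph G with input attachments contains a dilation—a set S of state vertices with |T(S)| < |S|, where T(S) is the set of all vertices (states or inputs) having an edge into some vertex of S—then every linear system (A,B) consistent with the graph has rank [B, AB, ..., A^{N-1}B] < N. -/
open Matrix
open scoped Classical

/-- If the graph contains a dilation — a set `S` of state vertices whose companion set
`T(S)` (all state or input vertices with an edge into `S`) satisfies `|T(S)| < |S|` —
then every consistent linear system `(A, B)` has a rank-deficient controllability matrix. -/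
theorem dilation_implies_uncontrollable (N M : ℕ)
    (E : Fin N → Fin N → Prop) (H : Fin M → Fin N → Prop)
    (S : Finset (Fin N))
    (hdil : (Finset.univ.filter fun w : Fin N => ∃ s ∈ S, E w s).card +
            (Finset.univ.filter fun j : Fin M => ∃ s ∈ S, H j s).card < S.card)
    (A : Matrix (Fin N) (Fin N) ℝ) (B : Matrix (Fin N) (Fin M) ℝ)
    (hA : ∀ i j : Fin N, A i j ≠ 0 → E j i)
    (hB : ∀ (i : Fin N) (j : Fin M), B i j ≠ 0 → H j i) :
    (Matrix.of fun (i : Fin N) (p : Fin N × Fin M) =>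
        (A ^ (p.1 : ℕ) * B) i p.2).rank < N := by
  classical
  set TE := Finset.univ.filter (fun w : Fin N => ∃ s ∈ S, E w s) with hTEdef
  set TH := Finset.univ.filter (fun j : Fin M => ∃ s ∈ S, H j s) with hTHdef
  set rows : {x // x ∈ S} → ((({x // x ∈ TE}) ⊕ ({x // x ∈ TH})) → ℝ) :=
    fun s => Sum.elim (fun w => A s.1 w.1) (fun j => B s.1 j.1) with hrows
  have hnotli : ¬ LinearIndependent ℝ rows := by
    intro h
    have hle := h.fintype_card_le_finrank
    simp only [Fintype.card_coe, Module.finrank_fintype_fun_eq_card,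
      Fintype.card_sum] at hle
    omega
  obtain ⟨g, hsum, i0, hgi0⟩ := Fintype.not_linearIndependent_iff.mp hnotli
  set v : Fin N → ℝ := fun i => if h : i ∈ S then g ⟨i, h⟩ else 0 with hv
  have hsum' : ∀ (c : Fin N → ℝ),
      ∑ i, v i * c i = ∑ s : {x // x ∈ S}, g s * c s.1 := by
    intro c
    calc ∑ i, v i * c i = ∑ i ∈ S, v i * c i := by
          refine (Finset.sum_subset S.subset_univ ?_).symm
          intro x _ hx
          simp [hv, dif_neg hx]
      _ = ∑ s : {x // x ∈ S}, v s.1 * c s.1 :=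
          Finset.sum_subtype S (fun x => Iff.rfl) _
      _ = ∑ s : {x // x ∈ S}, g s * c s.1 := by
          refine Finset.sum_congr rfl fun s _ => ?_
          simp [hv, dif_pos s.2]
  have hvA : Matrix.vecMul v A = 0 := by
    funext j
    have hrw : Matrix.vecMul v A j = ∑ s : {x // x ∈ S}, g s * A s.1 j := by
      simp only [Matrix.vecMul, dotProduct]
      exact hsum' (fun i => A i j)
    by_cases hj : j ∈ TE
    · have := congrFun hsum (Sum.inl ⟨j, hj⟩)
      simpa [hrows, Finset.sum_apply, hrw] using this
    · rw [hrw]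
      simp only [Pi.zero_apply]
      refine Finset.sum_eq_zero fun s _ => ?_
      have hAz : A s.1 j = 0 := by
        by_contra hne
        exact hj (by simp [hTEdef]; exact ⟨s.1, s.2, hA s.1 j hne⟩)
      simp [hAz]
  have hvB : Matrix.vecMul v B = 0 := by
    funext j
    have hrw : Matrix.vecMul v B j = ∑ s : {x // x ∈ S}, g s * B s.1 j := by
      simp only [Matrix.vecMul, dotProduct]
      exact hsum' (fun i => B i j)
    by_cases hj : j ∈ TH
    · have := congrFun hsum (Sum.inr ⟨j, hj⟩)
      simpa [hrows, Finset.sum_apply, hrw] using this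
    · rw [hrw]
      simp only [Pi.zero_apply]
      refine Finset.sum_eq_zero fun s _ => ?_
      have hBz : B s.1 j = 0 := by
        by_contra hne
        exact hj (by simp [hTHdef]; exact ⟨s.1, s.2, hB s.1 j hne⟩)
      simp [hBz]
  have hvk : ∀ k : ℕ, Matrix.vecMul v (A ^ k * B) = 0 := by
    intro k
    induction k with
    | zero => simpa using hvB
    | succ n ih =>
        rw [pow_succ', ← Matrix.vecMul_vecMul, ← Matrix.vecMul_vecMul, hvA,
          Matrix.zero_vecMul, Matrix.zero_vecMul]
  set C := (Matrix.of fun (i : Fin N) (p : Fin N × Fin M) =>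
      (A ^ (p.1 : ℕ) * B) i p.2) with hC
  have hvC : Matrix.vecMul v C = 0 := by
    funext p
    have := congrFun (hvk p.1) p.2
    simpa [hC, Matrix.vecMul, dotProduct] using this
  have hvne : v ≠ 0 := by
    intro h
    apply hgi0
    have := congrFun h i0.1
    simpa [hv, dif_pos i0.2] using this
  rw [← Matrix.rank_transpose]
  have hkermem : v ∈ LinearMap.ker Cᵀ.mulVecLin := by
    rw [LinearMap.mem_ker, Matrix.mulVecLin_apply, Matrix.mulVec_transpose]
    exact hvC
  have hrn := LinearMap.finrank_range_add_finrank_ker Cᵀ.mulVecLin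
  have hkpos : 0 < Module.finrank ℝ (LinearMap.ker Cᵀ.mulVecLin) := by
    refine Module.finrank_pos_iff.mpr ?_
    exact nontrivial_of_ne ⟨v, hkermem⟩ 0 (by simpa [Submodule.mk_eq_zero] using hvne)
  simp only [Module.finrank_fintype_fun_eq_card, Fintype.card_fin] at hrn
  rw [Matrix.rank]
  omega
end
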